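/- Let $l>1$ and $\alpha>0$ be constants, and let $S:[R,\infty)\to[0,\infty)$ be a function such that (i) $S(r)\to 0$ as $r\to+\infty$, and (ii) there is a constant $C>0$ such that $S(r_2) \le C\big((r_1/r_2)^{\alpha} + S(r_1)^{l}\big)$ whenever $r_2 \ge 2 r_1$ and $r_1 \ge R$. Then for any $\beta \in (0,(1-1/l)\alpha)$ there exists $R_0 \ge R$ such that $S(r) \le r^{-\beta}$ for all $r > R_0$. -/
import Mathlib

open Filter

set_option maxHeartbeats 1000000

theorem stmt_1 (l α R C : ℝ) (hl : 1 < l) (hα : 0 < α) (hC : 0 < C)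
    (S : ℝ → ℝ) (hS0 : ∀ r, R ≤ r → 0 ≤ S r)
    (hSlim : Tendsto S atTop (nhds 0))
    (hrec : ∀ r₁ r₂ : ℝ, R ≤ r₁ → 2 * r₁ ≤ r₂ →
      S r₂ ≤ C * ((r₁ / r₂) ^ α + S r₁ ^ l)) :
    ∀ β : ℝ, β ∈ Set.Ioo 0 ((1 - 1 / l) * α) →
      ∃ R₀ : ℝ, R ≤ R₀ ∧ ∀ r : ℝ, R₀ < r → S r ≤ r ^ (-β) := by
  rintro β ⟨hβ0, hβα⟩
  have hl0 : (0:ℝ) < l := by linarith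
  have hl1 : (0:ℝ) < l - 1 := by linarith
  have hinvl : 1 / l < 1 := by rw [div_lt_one hl0]; linarith
  have hinvl0 : 0 < 1 / l := by positivity
  -- β' strictly between β and (1-1/l)α
  set β' : ℝ := (β + (1 - 1/l) * α) / 2 with hβ'def
  have hβ'1 : β < β' := by rw [hβ'def]; linarith
  have hβ'2 : β' < (1 - 1/l) * α := by rw [hβ'def]; linarith
  have hβ'0 : 0 < β' := lt_trans hβ0 hβ'1
  -- γ strictly between 1/l and 1 - β'/α
  have hkey : 1 / l < 1 - β' / α := by
    have : β' / α < 1 - 1/l := by rw [div_lt_iff₀ hα]; linarith [hβ'2]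
    linarith
  set γ : ℝ := (1/l + (1 - β'/α)) / 2 with hγdef
  have hγ1 : 1/l < γ := by rw [hγdef]; linarith
  have hγ2 : γ < 1 - β'/α := by rw [hγdef]; linarith
  have hγ0 : 0 < γ := lt_trans hinvl0 hγ1
  have hγlt1 : γ < 1 := by
    have : 0 < β' / α := by positivity
    linarith
  have h1γ : 0 < 1 - γ := by linarith
  set δ : ℝ := (1-γ)*α - β' with hδdef
  have hδ : 0 < δ := by
    have h := mul_lt_mul_of_pos_right hγ2 hα
    have hb : β'/α*α = β' := div_mul_cancel₀ _ (ne_of_gt hα)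
    rw [hδdef]; nlinarith
  set q : ℝ := β' * (γ*l - 1) with hqdef
  have hγl : 1 < γ * l := by
    have h := mul_lt_mul_of_pos_right hγ1 hl0
    have hb : 1/l*l = 1 := div_mul_cancel₀ _ (ne_of_gt hl0)
    nlinarith
  have hq : 0 < q := by rw [hqdef]; nlinarith
  -- the scale P
  set P : ℝ := max (max ((2:ℝ) ^ (1-γ)⁻¹) ((2*C) ^ δ⁻¹)) ((2*C) ^ q⁻¹) with hPdef
  have h2C : (0:ℝ) < 2*C := by linarith
  have hP2 : (2:ℝ) ≤ P := by
    have h1 : (2:ℝ) = (2:ℝ) ^ (1:ℝ) := (Real.rpow_one 2).symm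
    have h2 : (2:ℝ) ^ (1:ℝ) ≤ (2:ℝ) ^ (1-γ)⁻¹ := by
      apply Real.rpow_le_rpow_of_exponent_le (by norm_num)
      rw [le_inv_comm₀ one_pos h1γ]; simp; linarith
    calc (2:ℝ) = (2:ℝ) ^ (1:ℝ) := h1
      _ ≤ (2:ℝ) ^ (1-γ)⁻¹ := h2
      _ ≤ P := le_trans (le_max_left _ _) (le_max_left _ _)
  have hP1 : (1:ℝ) < P := by linarith
  have hP0 : (0:ℝ) < P := by linarith
  -- power facts about P
  have hPpow : ∀ a : ℝ, 0 < a → ∀ x : ℝ, 0 < x → a ^ x⁻¹ ≤ P → a ≤ P ^ x := by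
    intro a ha x hx hle
    have := Real.rpow_le_rpow (le_of_lt (Real.rpow_pos_of_pos ha _)) hle (le_of_lt hx)
    rwa [← Real.rpow_mul (le_of_lt ha), inv_mul_cancel₀ (ne_of_gt hx),
      Real.rpow_one] at this
  have hP1γ : (2:ℝ) ≤ P ^ (1-γ) :=
    hPpow 2 two_pos (1-γ) h1γ (le_trans (le_max_left _ _) (le_max_left _ _))
  have hPδ : 2*C ≤ P ^ δ :=
    hPpow (2*C) h2C δ hδ (le_trans (le_max_right _ _) (le_max_left _ _))
  have hPq : 2*C ≤ P ^ q :=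
    hPpow (2*C) h2C q hq (le_max_right _ _)
  -- the constant E
  set E : ℝ := (P^q / (2*C)) ^ (l-1)⁻¹ with hEdef
  have hPq0 : 0 < P ^ q / (2*C) := by positivity
  have hE0 : 0 < E := Real.rpow_pos_of_pos hPq0 _
  have hE1 : 1 ≤ E := by
    apply Real.one_le_rpow
    · rw [le_div_iff₀ h2C]; simpa using hPq
    · positivity
  have hEl : 2*C * E ^ (l-1) = P ^ q := by
    rw [hEdef, ← Real.rpow_mul (le_of_lt hPq0), inv_mul_cancel₀ (ne_of_gt hl1), Real.rpow_one]
    field_simp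
  -- smallness threshold
  set ε : ℝ := E * P ^ (-β') with hεdef
  have hε0 : 0 < ε := by
    have := Real.rpow_pos_of_pos hP0 (-β')
    positivity
  obtain ⟨R₂, hR₂⟩ := (Filter.eventually_atTop).mp (hSlim.eventually (gt_mem_nhds hε0))
  set R₁ : ℝ := max R (max R₂ 1) with hR₁def
  have hR₁R : R ≤ R₁ := le_max_left _ _
  have hR₁1 : (1:ℝ) ≤ R₁ := le_trans (le_max_right _ _) (le_max_right _ _)
  have hR₁0 : (0:ℝ) < R₁ := lt_of_lt_of_le one_pos hR₁1
  have hSR₁ : ∀ r, R₁ ≤ r → S r ≤ ε := by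
    intro r hr
    exact le_of_lt (hR₂ r (le_trans (le_trans (le_max_left _ _) (le_max_right _ _)) hr))
  -- main induction
  have key : ∀ n : ℕ, ∀ ρ : ℝ, 1 ≤ ρ → ρ ≤ P ^ ((γ⁻¹^n : ℝ)) → S (R₁ * ρ) ≤ E * ρ ^ (-β') := by
    intro n
    induction n with
    | zero =>
      intro ρ hρ1 hρle
      rw [pow_zero, Real.rpow_one] at hρle
      have h1 : S (R₁ * ρ) ≤ ε := hSR₁ _ (le_mul_of_one_le_right (le_of_lt hR₁0) hρ1)
      have h2 : ε ≤ E * ρ ^ (-β') := by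
        rw [hεdef]
        exact mul_le_mul_of_nonneg_left
          (Real.rpow_le_rpow_of_nonpos (lt_of_lt_of_le one_pos hρ1) hρle
            (neg_nonpos.mpr (le_of_lt hβ'0))) (le_of_lt hE0)
      linarith
    | succ n ih =>
      intro ρ hρ1 hρle
      by_cases hcase : ρ ≤ P ^ ((γ⁻¹^n : ℝ))
      · exact ih ρ hρ1 hcase
      push_neg at hcase
      have hρ0 : (0:ℝ) < ρ := lt_of_lt_of_le one_pos hρ1
      have hγinv1 : (1:ℝ) ≤ γ⁻¹ := le_of_lt ((one_lt_inv₀ hγ0).mpr hγlt1)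
      have hexp1 : (1:ℝ) ≤ γ⁻¹^n := one_le_pow₀ hγinv1
      have hρP : P ≤ ρ := by
        calc P = P ^ (1:ℝ) := (Real.rpow_one P).symm
          _ ≤ P ^ ((γ⁻¹^n : ℝ)) := Real.rpow_le_rpow_of_exponent_le (le_of_lt hP1) hexp1
          _ ≤ ρ := le_of_lt hcase
      set ρ₁ : ℝ := ρ ^ γ with hρ₁def
      have hρ₁1 : 1 ≤ ρ₁ := Real.one_le_rpow hρ1 (le_of_lt hγ0)
      have hρ₁0 : (0:ℝ) < ρ₁ := lt_of_lt_of_le one_pos hρ₁1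
      have hρ₁le : ρ₁ ≤ P ^ ((γ⁻¹^n : ℝ)) := by
        have h := Real.rpow_le_rpow (le_of_lt hρ0) hρle (le_of_lt hγ0)
        rw [← Real.rpow_mul (le_of_lt hP0)] at h
        have he : (γ⁻¹:ℝ)^(n+1) * γ = γ⁻¹^n := by
          rw [pow_succ]; field_simp
        rwa [he] at h
      have hI := ih ρ₁ hρ₁1 hρ₁le
      have hRr₁ : R ≤ R₁ * ρ₁ :=
        le_trans hR₁R (le_mul_of_one_le_right (le_of_lt hR₁0) hρ₁1)
      have h2ρ : 2 * (R₁ * ρ₁) ≤ R₁ * ρ := by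
        have hsplit : ρ₁ * ρ^(1-γ) = ρ := by
          rw [hρ₁def, ← Real.rpow_add hρ0]; norm_num
        have h2 : (2:ℝ) ≤ ρ^(1-γ) :=
          le_trans hP1γ (Real.rpow_le_rpow (le_of_lt hP0) hρP (le_of_lt h1γ))
        have := mul_le_mul_of_nonneg_right h2 (le_of_lt hρ₁0)
        rw [mul_comm (ρ^(1-γ)) ρ₁, hsplit] at this
        calc 2 * (R₁ * ρ₁) = R₁ * (2 * ρ₁) := by ring
          _ ≤ R₁ * ρ := mul_le_mul_of_nonneg_left this (le_of_lt hR₁0)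
      have hstep := hrec (R₁*ρ₁) (R₁*ρ) hRr₁ h2ρ
      have hratio : (R₁*ρ₁)/(R₁*ρ) = ρ ^ (γ-1) := by
        have h1 : ρ ^ (γ-1) = ρ^γ / ρ := by
          rw [Real.rpow_sub hρ0, Real.rpow_one]
        rw [mul_div_mul_left _ _ (ne_of_gt hR₁0), hρ₁def, h1]
      rw [hratio, ← Real.rpow_mul (le_of_lt hρ0)] at hstep
      have hSl : S (R₁*ρ₁) ^ l ≤ E^l * ρ ^ (γ*(-β')*l) := by
        have h1 : S (R₁*ρ₁) ^ l ≤ (E * ρ₁ ^ (-β')) ^ l :=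
          Real.rpow_le_rpow (hS0 _ hRr₁) hI (le_of_lt hl0)
        have h2 : (E * ρ₁ ^ (-β')) ^ l = E^l * ρ ^ (γ*(-β')*l) := by
          rw [Real.mul_rpow (le_of_lt hE0) (le_of_lt (Real.rpow_pos_of_pos hρ₁0 _)),
            hρ₁def, ← Real.rpow_mul (le_of_lt hρ0), ← Real.rpow_mul (le_of_lt hρ0)]
        rw [← h2]; exact h1
      have hρβ'0 : (0:ℝ) ≤ ρ ^ (-β') := le_of_lt (Real.rpow_pos_of_pos hρ0 _)
      have hhalf1 : C * ρ ^ ((γ-1)*α) ≤ E/2 * ρ ^ (-β') := by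
        have e1 : ρ ^ ((γ-1)*α) = ρ ^ (-β') * ρ ^ (-δ) := by
          rw [← Real.rpow_add hρ0]; congr 1; rw [hδdef]; ring
        have e2 : ρ ^ (-δ) ≤ P ^ (-δ) :=
          Real.rpow_le_rpow_of_nonpos hP0 hρP (neg_nonpos.mpr (le_of_lt hδ))
        have e3 : P ^ (-δ) ≤ (2*C)⁻¹ := by
          rw [Real.rpow_neg (le_of_lt hP0)]
          exact inv_anti₀ h2C hPδ
        calc C * ρ^((γ-1)*α) = C * (ρ^(-β') * ρ^(-δ)) := by rw [e1]
          _ ≤ C * (ρ^(-β') * (2*C)⁻¹) := by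
              apply mul_le_mul_of_nonneg_left
                (mul_le_mul_of_nonneg_left (le_trans e2 e3) hρβ'0) (le_of_lt hC)
          _ = 1/2 * ρ^(-β') := by field_simp
          _ ≤ E/2 * ρ^(-β') := by
              apply mul_le_mul_of_nonneg_right _ hρβ'0
              linarith
      have hhalf2 : C * (E^l * ρ^(γ*(-β')*l)) ≤ E/2 * ρ^(-β') := by
        have e1 : ρ ^ (γ*(-β')*l) = ρ^(-β') * ρ^(-q) := by
          rw [← Real.rpow_add hρ0]; congr 1; rw [hqdef]; ring
        have e2 : ρ^(-q) ≤ P^(-q) :=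
          Real.rpow_le_rpow_of_nonpos hP0 hρP (neg_nonpos.mpr (le_of_lt hq))
        have e3 : E^l = E^(l-1) * E := by
          have : l = (l-1) + 1 := by ring
          rw [this]; rw [Real.rpow_add hE0, Real.rpow_one]; ring_nf
        have hEl10 : (0:ℝ) < E^(l-1) := Real.rpow_pos_of_pos hE0 _
        calc C * (E^l * ρ^(γ*(-β')*l)) = C * E^l * ρ^(-β') * ρ^(-q) := by rw [e1]; ring
          _ ≤ C * E^l * ρ^(-β') * P^(-q) := by
              apply mul_le_mul_of_nonneg_left e2
              have : (0:ℝ) ≤ E^l := le_of_lt (Real.rpow_pos_of_pos hE0 _)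
              positivity
          _ = E/2 * ρ^(-β') := by
              rw [Real.rpow_neg (le_of_lt hP0), ← hEl, e3]
              field_simp
      calc S (R₁ * ρ) ≤ C * (ρ^((γ-1)*α) + S (R₁*ρ₁)^l) := hstep
        _ ≤ C * (ρ^((γ-1)*α) + E^l * ρ^(γ*(-β')*l)) := by
            apply mul_le_mul_of_nonneg_left _ (le_of_lt hC)
            linarith
        _ = C * ρ^((γ-1)*α) + C*(E^l * ρ^(γ*(-β')*l)) := by ring
        _ ≤ E/2 * ρ^(-β') + E/2 * ρ^(-β') := add_le_add hhalf1 hhalf2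
        _ = E * ρ^(-β') := by ring
  -- conclusion
  have hββ' : (0:ℝ) < β' - β := by linarith
  set W : ℝ := (E * R₁ ^ β') ^ (β' - β)⁻¹ with hWdef
  have hR₁β' : (1:ℝ) ≤ R₁ ^ β' := Real.one_le_rpow hR₁1 (le_of_lt hβ'0)
  have hbase1 : (1:ℝ) ≤ E * R₁ ^ β' := one_le_mul_of_one_le_of_one_le hE1 hR₁β'
  refine ⟨max R₁ W, le_trans hR₁R (le_max_left _ _), ?_⟩
  intro r hr
  have hrR₁ : R₁ < r := lt_of_le_of_lt (le_max_left _ _) hr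
  have hrW : W < r := lt_of_le_of_lt (le_max_right _ _) hr
  have hr0 : (0:ℝ) < r := lt_trans hR₁0 hrR₁
  set ρ : ℝ := r / R₁ with hρdef
  have hρ1 : 1 ≤ ρ := (one_le_div hR₁0).mpr (le_of_lt hrR₁)
  have hρ0 : (0:ℝ) < ρ := lt_of_lt_of_le one_pos hρ1
  obtain ⟨n, hn⟩ := pow_unbounded_of_one_lt (Real.logb P ρ) ((one_lt_inv₀ hγ0).mpr hγlt1)
  have hρle : ρ ≤ P ^ ((γ⁻¹^n : ℝ)) := by
    calc ρ = P ^ Real.logb P ρ := (Real.rpow_logb hP0 (ne_of_gt hP1) hρ0).symm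
      _ ≤ P ^ ((γ⁻¹^n:ℝ)) := Real.rpow_le_rpow_of_exponent_le (le_of_lt hP1) (le_of_lt hn)
  have hkey := key n ρ hρ1 hρle
  have hrρ : R₁ * ρ = r := by rw [hρdef]; field_simp
  rw [hrρ] at hkey
  have hsplit : ρ ^ (-β') = R₁ ^ β' * r ^ (-β') := by
    rw [hρdef, Real.div_rpow (le_of_lt hr0) (le_of_lt hR₁0), Real.rpow_neg (le_of_lt hR₁0)]
    rw [div_eq_mul_inv, inv_inv]
    ring
  have hrβ'0 : (0:ℝ) ≤ r ^ (-β') := le_of_lt (Real.rpow_pos_of_pos hr0 _)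
  have hrWpow : E * R₁ ^ β' ≤ r ^ (β' - β) := by
    have hW0 : (0:ℝ) ≤ W := Real.rpow_nonneg (by linarith) _
    have h1 : W ^ (β' - β) ≤ r ^ (β' - β) :=
      Real.rpow_le_rpow hW0 (le_of_lt hrW) (le_of_lt hββ')
    have h2 : W ^ (β' - β) = E * R₁ ^ β' := by
      rw [hWdef, ← Real.rpow_mul (by linarith), inv_mul_cancel₀ (ne_of_gt hββ'),
        Real.rpow_one]
    rw [← h2]; exact h1
  calc S r ≤ E * ρ ^ (-β') := hkey
    _ = (E * R₁ ^ β') * r ^ (-β') := by rw [hsplit]; ring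
    _ ≤ r ^ (β' - β) * r ^ (-β') := mul_le_mul_of_nonneg_right hrWpow hrβ'0
    _ = r ^ (-β) := by rw [← Real.rpow_add hr0]; congr 1; ring
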